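/- Let q be a real number with 0 < q < 1, let α > 0 be real, let h be a positive integer, let x > 0 be real, and let a and b be odd positive integers. Then for every complex s, ∑_{j=0}^{a-1} (-1)^j q^{jbh} ζ̃_{q^a}^{(α,h)}(s, bx + bj/a) = [a]_{q^α}^{s} · [2]_{q^a} · ∑_{j=0}^{a-1} (-1)^j q^{jbh} ∑_{i=0}^{b-1} (-1)^i q^{iah} ∑_{m=0}^∞ (-1)^m q^{mabh} / [ab(m+x) + ai + bj]_{q^α}^{s}, where [a]_{q^α}^{s} = exp(s · log [a]_{q^α}). -/

import Mathlib

/-!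
Base change for q-numbers, `[y]_{Q^a} = [a y]_Q / [a]_Q`, pulls the factor `[a]_{q^α}^s` out of
each `ζ̃_{q^a}` and turns its series into `∑ₙ (-q^{ah})^n [a n + a y]_{q^α}^{-s}`. Splitting the
index as `n = m b + i` with `0 ≤ i < b` and using `(-1)^{mb} = (-1)^m` for odd `b` gives the inner
double sum. All series converge absolutely: the weights decay geometrically while the q-numbers
are monotone in the argument and bounded by `1 / (1 - q^α)`, so the factors `[·]^{-s}` are bounded.
-/

/-- The `q`-number `[x]_q = (1 - q^x)/(1 - q)` (real exponent, via `rpow`). -/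
noncomputable def qnum (q x : ℝ) : ℝ := (1 - q ^ x) / (1 - q)

/-- The `m`-th term of the weighted `(h,q)`-zeta series:
`(-1)^m q^{mh} [m+x]_{q^α}^{-s}` where `t^{-s} = exp(-s · log t)` with the real log. -/
noncomputable def zetaTerm (q α : ℝ) (h : ℕ) (x : ℝ) (s : ℂ) (m : ℕ) : ℂ :=
  (-1 : ℂ) ^ m * (q : ℂ) ^ (m * h) *
    Complex.exp (-s * (Real.log (qnum (q ^ α) ((m : ℝ) + x)) : ℂ))

/-- The weighted `(h,q)`-zeta function
`ζ̃_q^{(α,h)}(s,x) = [2]_q ∑_{m≥0} (-1)^m q^{mh} [m+x]_{q^α}^{-s}`. -/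
noncomputable def hqZeta (q α : ℝ) (h : ℕ) (x : ℝ) (s : ℂ) : ℂ :=
  (qnum q 2 : ℂ) * ∑' m : ℕ, zetaTerm q α h x s m

open Finset

section QNumber

variable {Q : ℝ}

lemma qnum_pos (hQ0 : 0 < Q) (hQ1 : Q < 1) {y : ℝ} (hy : 0 < y) : 0 < qnum Q y :=
  div_pos (sub_pos.2 (Real.rpow_lt_one hQ0.le hQ1 hy)) (sub_pos.2 hQ1)

lemma qnum_le_qnum (hQ0 : 0 < Q) (hQ1 : Q < 1) {y z : ℝ} (hyz : y ≤ z) :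
    qnum Q y ≤ qnum Q z := by
  have hpow : Q ^ z ≤ Q ^ y := Real.rpow_le_rpow_of_exponent_ge hQ0 hQ1.le hyz
  unfold qnum
  gcongr

lemma qnum_le_inv_one_sub (hQ0 : 0 ≤ Q) (hQ1 : Q < 1) (y : ℝ) : qnum Q y ≤ (1 - Q)⁻¹ := by
  rw [qnum, div_eq_mul_inv]
  exact mul_le_of_le_one_left (inv_nonneg.2 (sub_pos.2 hQ1).le)
    (sub_le_self _ (Real.rpow_nonneg hQ0 y))

lemma qnum_pow (hQ0 : 0 ≤ Q) (hQ1 : Q ≠ 1) (a : ℕ) (y : ℝ) :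
    qnum (Q ^ a) y = qnum Q (a * y) / qnum Q a := by
  have : 1 - Q ≠ 0 := sub_ne_zero.2 hQ1.symm
  simp only [qnum, ← Real.rpow_natCast Q a, ← Real.rpow_mul hQ0]
  field_simp

lemma abs_log_qnum_le (hQ0 : 0 < Q) (hQ1 : Q < 1) {B y : ℝ} (hB : 0 < B) (hBy : B ≤ y) :
    |Real.log (qnum Q y)| ≤ max |Real.log (qnum Q B)| |Real.log (1 - Q)| := by
  have hlow := Real.log_le_log (qnum_pos hQ0 hQ1 hB) (qnum_le_qnum hQ0 hQ1 hBy)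
  have hup := Real.log_le_log (qnum_pos hQ0 hQ1 (hB.trans_le hBy)) (qnum_le_inv_one_sub hQ0.le hQ1 y)
  rw [Real.log_inv] at hup
  simpa only [abs_neg] using abs_le_max_abs_abs hlow hup

end QNumber

lemma summable_pow_mul_cexp_of_abs_le {r : ℂ} (hr : ‖r‖ < 1) {f : ℕ → ℝ} {M : ℝ}
    (hf : ∀ n, |f n| ≤ M) (s : ℂ) : Summable fun n => r ^ n * Complex.exp (-s * f n) := by
  refine Summable.of_norm_bounded
    ((summable_geometric_of_lt_one (norm_nonneg r) hr).mul_right (Real.exp (‖s‖ * M))) fun n => ?_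
  rw [norm_mul, norm_pow, Complex.norm_exp]
  gcongr
  calc (-s * f n).re = -(s.re * f n) := by simp
    _ ≤ |s.re * f n| := neg_le_abs _
    _ = |s.re| * |f n| := abs_mul ..
    _ ≤ ‖s‖ * M := mul_le_mul (Complex.abs_re_le_norm s) (hf n) (abs_nonneg _) (norm_nonneg s)

lemma summable_pow_mul_cexp_log_qnum {Q : ℝ} (hQ0 : 0 < Q) (hQ1 : Q < 1) {r : ℂ} (hr : ‖r‖ < 1)
    {A B : ℝ} (hA : 0 ≤ A) (hB : 0 < B) (s : ℂ) :
    Summable fun n : ℕ => r ^ n * Complex.exp (-s * Real.log (qnum Q (A * n + B))) :=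
  summable_pow_mul_cexp_of_abs_le hr
    (fun n => abs_log_qnum_le hQ0 hQ1 hB (le_add_of_nonneg_left (by positivity))) s

lemma tsum_eq_sum_range_tsum_mul_add {R : Type*} [AddCommGroup R] [UniformSpace R]
    [IsUniformAddGroup R] [CompleteSpace R] [T0Space R] {g : ℕ → R} (hg : Summable g) {b : ℕ}
    (hb : 0 < b) : ∑' n, g n = ∑ i ∈ range b, ∑' m, g (m * b + i) := by
  obtain ⟨b, rfl⟩ := Nat.exists_eq_succ_of_ne_zero hb.ne'
  rw [Nat.sumByResidueClasses hg (b + 1), Finset.sum_range]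
  refine Finset.sum_congr rfl fun i _ => tsum_congr fun m => ?_
  rw [add_comm, mul_comm]
  rfl

lemma tsum_pow_mul_eq_sum_range {r : ℂ} {φ : ℕ → ℂ} (hφ : Summable fun n => r ^ n * φ n)
    {b : ℕ} (hb : 0 < b) :
    ∑' n, r ^ n * φ n = ∑ i ∈ range b, r ^ i * ∑' m, (r ^ b) ^ m * φ (m * b + i) := by
  rw [tsum_eq_sum_range_tsum_mul_add hφ hb]
  refine Finset.sum_congr rfl fun i _ => ?_
  rw [← tsum_mul_left]
  refine tsum_congr fun m => ?_
  ring

section ZetaAtPowerBase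

variable {q α : ℝ} {a : ℕ} {y : ℝ}

lemma hqZeta_pow_eq_tsum (hq0 : 0 < q) (hq1 : q < 1) (hα : 0 < α) (ha : 0 < a) (hy : 0 < y)
    (h : ℕ) (s : ℂ) :
    hqZeta (q ^ a) α h y s = qnum (q ^ a) 2 * (Complex.exp (s * Real.log (qnum (q ^ α) a)) *
      ∑' n : ℕ, (-(q : ℂ) ^ (a * h)) ^ n *
        Complex.exp (-s * Real.log (qnum (q ^ α) (a * n + a * y)))) := by
  have hQ0 : 0 < q ^ α := Real.rpow_pos_of_pos hq0 α
  have hQ1 : q ^ α < 1 := Real.rpow_lt_one hq0.le hq1 hα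
  have hbase : (q ^ a) ^ α = (q ^ α) ^ a := by
    rw [← Real.rpow_natCast, ← Real.rpow_natCast, ← Real.rpow_mul hq0.le,
      ← Real.rpow_mul hq0.le, mul_comm]
  rw [hqZeta]
  congr 1
  rw [← tsum_mul_left]
  refine tsum_congr fun n => ?_
  have hpos : 0 < qnum (q ^ α) (a * n + a * y) := qnum_pos hQ0 hQ1 (by positivity)
  rw [zetaTerm, hbase, qnum_pow hQ0.le hQ1.ne, mul_add,
    Real.log_div hpos.ne' (qnum_pos hQ0 hQ1 (by positivity)).ne', Complex.ofReal_sub,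
    mul_sub, sub_eq_add_neg, add_comm, Complex.exp_add]
  simp only [neg_mul, neg_neg]
  push_cast
  ring

lemma hqZeta_pow_eq_sum_range (hq0 : 0 < q) (hq1 : q < 1) (hα : 0 < α) (ha : 0 < a)
    (hy : 0 < y) {h : ℕ} (hh : 0 < h) {b : ℕ} (hb : Odd b) (s : ℂ) :
    hqZeta (q ^ a) α h y s =
      Complex.exp (s * Real.log (qnum (q ^ α) a)) * qnum (q ^ a) 2 *
        ∑ i ∈ range b, (-1 : ℂ) ^ i * (q : ℂ) ^ (i * a * h) *
          ∑' m : ℕ, (-1 : ℂ) ^ m * (q : ℂ) ^ (m * a * b * h) *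
            Complex.exp (-s * Real.log (qnum (q ^ α) (a * b * m + a * i + a * y))) := by
  have hQ0 : 0 < q ^ α := Real.rpow_pos_of_pos hq0 α
  have hQ1 : q ^ α < 1 := Real.rpow_lt_one hq0.le hq1 hα
  have hr : ‖-(q : ℂ) ^ (a * h)‖ < 1 := by
    rw [norm_neg, norm_pow, Complex.norm_real, Real.norm_of_nonneg hq0.le]
    exact pow_lt_one₀ hq0.le hq1 (by positivity)
  rw [hqZeta_pow_eq_tsum hq0 hq1 hα ha hy, tsum_pow_mul_eq_sum_range
    (summable_pow_mul_cexp_log_qnum hQ0 hQ1 hr (by positivity) (by positivity) s) hb.pos,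
    mul_sum, mul_sum, mul_sum]
  refine sum_congr rfl fun i _ => ?_
  simp only [← tsum_mul_left, hb.neg_pow]
  refine tsum_congr fun m => ?_
  have harg : (a : ℝ) * ↑(m * b + i) + a * y = a * b * m + a * i + a * y := by
    push_cast
    ring
  rw [harg]
  ring

end ZetaAtPowerBase

theorem stmt2_general (q α x : ℝ) (hq0 : 0 < q) (hq1 : q < 1) (hα : 0 < α) (h : ℕ) (hh : 0 < h)
    (hx : 0 < x) (a b : ℕ) (hbo : Odd b) (s : ℂ) :
    ∑ j ∈ Finset.range a, (-1 : ℂ) ^ j * (q : ℂ) ^ (j * b * h) *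
        hqZeta (q ^ a) α h ((b : ℝ) * x + (b : ℝ) * (j : ℝ) / (a : ℝ)) s =
      Complex.exp (s * (Real.log (qnum (q ^ α) (a : ℝ)) : ℂ)) * (qnum (q ^ a) 2 : ℂ) *
        ∑ j ∈ Finset.range a, (-1 : ℂ) ^ j * (q : ℂ) ^ (j * b * h) *
          ∑ i ∈ Finset.range b, (-1 : ℂ) ^ i * (q : ℂ) ^ (i * a * h) *
            ∑' m : ℕ, (-1 : ℂ) ^ m * (q : ℂ) ^ (m * a * b * h) *
              Complex.exp (-s *
                (Real.log (qnum (q ^ α)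
                  ((a : ℝ) * (b : ℝ) * ((m : ℝ) + x) + (a : ℝ) * (i : ℝ) + (b : ℝ) * (j : ℝ))) : ℂ)) := by
  rw [mul_sum]
  refine sum_congr rfl fun j hj => ?_
  have ha : 0 < a := Nat.zero_lt_of_lt (mem_range.1 hj)
  have hb : (0 : ℝ) < b := Nat.cast_pos.2 hbo.pos
  have hy : 0 < (b : ℝ) * x + b * j / a := by positivity
  have harg (i m : ℕ) : (a : ℝ) * b * m + a * i + a * (b * x + b * j / a) =
      a * b * (m + x) + a * i + b * j := by
    field_simp
    ring
  rw [hqZeta_pow_eq_sum_range hq0 hq1 hα ha hy hh hbo s]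
  simp only [harg]
  ring

theorem stmt2 (q α x : ℝ) (hq0 : 0 < q) (hq1 : q < 1) (hα : 0 < α) (h : ℕ) (hh : 0 < h)
    (hx : 0 < x) (a b : ℕ) (ha : 0 < a) (hb : 0 < b) (hao : Odd a) (hbo : Odd b) (s : ℂ) :
    ∑ j ∈ Finset.range a, (-1 : ℂ) ^ j * (q : ℂ) ^ (j * b * h) *
        hqZeta (q ^ a) α h ((b : ℝ) * x + (b : ℝ) * (j : ℝ) / (a : ℝ)) s =
      Complex.exp (s * (Real.log (qnum (q ^ α) (a : ℝ)) : ℂ)) * (qnum (q ^ a) 2 : ℂ) *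
        ∑ j ∈ Finset.range a, (-1 : ℂ) ^ j * (q : ℂ) ^ (j * b * h) *
          ∑ i ∈ Finset.range b, (-1 : ℂ) ^ i * (q : ℂ) ^ (i * a * h) *
            ∑' m : ℕ, (-1 : ℂ) ^ m * (q : ℂ) ^ (m * a * b * h) *
              Complex.exp (-s *
                (Real.log (qnum (q ^ α)
                  ((a : ℝ) * (b : ℝ) * ((m : ℝ) + x) + (a : ℝ) * (i : ℝ) + (b : ℝ) * (j : ℝ))) : ℂ)) :=
  stmt2_general q α x hq0 hq1 hα h hh hx a b hbo s
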